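/- arXiv:2006.12562 — 6 statements merged into one kernel-verified Lean document; each statement's English description precedes it below -/
import Mathlib

section
/- For any graph G with n vertices and maximum independent set size α, if i_k denotes the number of independent sets of size k, then the sequence (i_k) for k from ⌈α(n-1)/(α+n)⌉ to α is weakly decreasing. -/
/-!
Give the vertices nonnegative weights `x` and let `I_k(x)` be the sum of `∏_{v ∈ s} x v` over
the independent sets `s` of size `k`; for `x = 1` this is `i_k`. We show
`α (k + 1) I_{k+1}(x) ≤ (α - k) (∑ x) I_k(x)` by induction on the support of `x`. If the support
contains an edge `uv`, no independent set contains both ends, so `(x u + x v) I(x)` is the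
combination `x v I(x') + x u I(x'')` of the weightings that move all the weight of `u` onto `v`,
resp. of `v` onto `u`; both have smaller support and the same total weight. If the support is
independent, `I_k(x)` is the `k`-th elementary symmetric function of at most `α` nonnegative
numbers, for which the inequality is a Newton-type inequality proved by induction on the number
of variables. At `x = 1` it reads `α (k + 1) i_{k+1} ≤ (α - k) n i_k`, and
`(α - k) n ≤ α (k + 1)` exactly when `k ≥ α (n - 1) / (α + n)`.
-/

open Finset

/-- The set of independent sets of a graph, as finsets of vertices. -/
def IsIndepFinset {V : Type*} (G : SimpleGraph V) (s : Finset V) : Prop :=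
  ∀ a ∈ s, ∀ b ∈ s, ¬ G.Adj a b

open Classical in
/-- `i_k(G)`: the number of independent sets of size `k` in `G`. -/
noncomputable def indepCount {V : Type*} [Fintype V] (G : SimpleGraph V) (k : ℕ) : ℕ :=
  (Finset.univ.filter fun s : Finset V => s.card = k ∧ IsIndepFinset G s).card

namespace Multiset

variable {R : Type*}

section CommSemiring

variable [CommSemiring R]

theorem esymm_zero_right (s : Multiset R) : s.esymm 0 = 1 := by
  simp [esymm, powersetCard_zero_left]

theorem esymm_one_right (s : Multiset R) : s.esymm 1 = s.sum := by
  simp [esymm, powersetCard_one]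

theorem esymm_eq_zero_of_card_lt {s : Multiset R} {k : ℕ} (h : card s < k) : s.esymm k = 0 := by
  simp [esymm, powersetCard_eq_empty _ h]

theorem esymm_cons_succ (a : R) (s : Multiset R) (k : ℕ) :
    (a ::ₘ s).esymm (k + 1) = s.esymm (k + 1) + a * s.esymm k := by
  simp [esymm, powersetCard_cons, sum_map_mul_left]

theorem esymm_eq_zero_of_forall_eq_zero {s : Multiset R} (hs : ∀ a ∈ s, a = 0) {k : ℕ}
    (hk : k ≠ 0) : s.esymm k = 0 := by
  refine sum_eq_zero fun p hp => ?_
  obtain ⟨t, ht, rfl⟩ := mem_map.1 hp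
  obtain ⟨hts, htk⟩ := mem_powersetCard.1 ht
  obtain ⟨a, ha⟩ := card_pos_iff_exists_mem.1 (htk ▸ Nat.pos_of_ne_zero hk)
  exact prod_eq_zero (hs a (mem_of_le hts ha) ▸ ha)

theorem esymm_add_replicate_zero (s : Multiset R) (m k : ℕ) :
    (s + replicate m 0).esymm k = s.esymm k := by
  induction m generalizing k with
  | zero => simp
  | succ m ih =>
    rw [replicate_succ, add_cons]
    cases k with
    | zero => simp only [esymm_zero_right]
    | succ k => rw [esymm_cons_succ, ih, zero_mul, add_zero]

end CommSemiring

variable [Field R] [LinearOrder R] [IsStrictOrderedRing R]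

theorem esymm_nonneg {s : Multiset R} (hs : ∀ a ∈ s, 0 ≤ a) (k : ℕ) : 0 ≤ s.esymm k := by
  refine sum_nonneg fun p hp => ?_
  obtain ⟨t, ht, rfl⟩ := mem_map.1 hp
  exact prod_nonneg fun a ha => hs a (mem_of_le (mem_powersetCard.1 ht).1 ha)

theorem sub_mul_esymm_nonneg {s : Multiset R} (hs : ∀ a ∈ s, 0 ≤ a) (k : ℕ) :
    0 ≤ (card s - k : R) * s.esymm k := by
  rcases le_or_gt k (card s) with hk | hk
  · exact mul_nonneg (sub_nonneg.2 (by exact_mod_cast hk)) (esymm_nonneg hs k)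
  · rw [esymm_eq_zero_of_card_lt hk, mul_zero]

theorem card_mul_esymm_succ_le {s : Multiset R} (hs : ∀ a ∈ s, 0 ≤ a) (k : ℕ) :
    (card s : R) * (k + 1) * s.esymm (k + 1) ≤ (card s - k) * s.esymm 1 * s.esymm k := by
  induction s using Multiset.induction_on generalizing k with
  | empty => simp [esymm_one_right]
  | cons c s ih =>
    have hs' : ∀ a ∈ s, 0 ≤ a := fun a ha => hs a (mem_cons_of_mem ha)
    cases k with
    | zero => simp [esymm_zero_right]
    | succ k =>
      have IH₁ := ih hs' (k + 1)
      have IH₂ := ih hs' k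
      rw [card_cons, esymm_cons_succ, esymm_cons_succ, esymm_cons_succ, esymm_zero_right,
        mul_one]
      push_cast at IH₁ IH₂ ⊢
      set M : R := (card s : R)
      set A := s.esymm (k + 1 + 1)
      set B := s.esymm (k + 1)
      set D := s.esymm k
      set S := s.esymm 1
      have hc : 0 ≤ c := hs c (mem_cons_self c s)
      have hS : 0 ≤ S := esymm_nonneg hs' 1
      rcases hS.eq_or_lt with hS0 | hSpos
      · have hzero : ∀ a ∈ s, a = 0 :=
          all_zero_of_le_zero_le_of_sum_eq_zero hs' (by rw [← esymm_one_right]; exact hS0.symm)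
        have hA : A = 0 := esymm_eq_zero_of_forall_eq_zero hzero (k + 1).succ_ne_zero
        have hB : B = 0 := esymm_eq_zero_of_forall_eq_zero hzero k.succ_ne_zero
        rw [← hS0, hA, hB]
        nlinarith [mul_nonneg (mul_self_nonneg c) (sub_mul_esymm_nonneg hs' k)]
      · have hM : 0 < M := by
          have : s ≠ 0 := by rintro rfl; simp [S, esymm_one_right] at hSpos
          exact Nat.cast_pos.2 (card_pos.2 this)
        -- multiplied by `M S`, the gap is a nonnegative combination of the gaps of the two
        -- inductive hypotheses plus a square
        have key : M * S * ((M + 1 - (k + 1)) * (S + c) * (B + c * D)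
              - (M + 1) * (k + 1 + 1) * (A + c * B))
            = (M + 1) * S * ((M - (k + 1)) * S * B - M * (k + 1 + 1) * A)
              + M * c * (S + c) * ((M - k) * S * D - M * (k + 1) * B)
              + (k + 1) * B * (S - M * c) ^ 2 := by ring
        have hgap : 0 ≤ M * S * ((M + 1 - (k + 1)) * (S + c) * (B + c * D)
              - (M + 1) * (k + 1 + 1) * (A + c * B)) := by
          have h₁ := mul_nonneg (mul_nonneg (by positivity : (0 : R) ≤ M + 1) hS)
            (sub_nonneg.2 IH₁)
          have h₂ := mul_nonneg (mul_nonneg (mul_nonneg hM.le hc) (add_nonneg hS hc))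
            (sub_nonneg.2 IH₂)
          have h₃ : 0 ≤ (k + 1) * B * (S - M * c) ^ 2 := by
            have := esymm_nonneg hs' (k + 1)
            positivity
          rw [key]
          exact add_nonneg (add_nonneg h₁ h₂) h₃
        exact sub_nonneg.1 (nonneg_of_mul_nonneg_right hgap (mul_pos hM hSpos))

theorem card_mul_esymm_succ_le_of_card_le {s : Multiset R} (hs : ∀ a ∈ s, 0 ≤ a) {m : ℕ}
    (hm : card s ≤ m) (k : ℕ) :
    (m : R) * (k + 1) * s.esymm (k + 1) ≤ (m - k) * s.esymm 1 * s.esymm k := by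
  have hpad : ∀ a ∈ s + replicate (m - card s) 0, 0 ≤ a := by
    intro a ha
    rcases mem_add.1 ha with ha | ha
    · exact hs a ha
    · exact (eq_of_mem_replicate ha).ge
  have h := card_mul_esymm_succ_le hpad k
  rwa [card_add, card_replicate, Nat.add_sub_cancel' hm, esymm_add_replicate_zero,
    esymm_add_replicate_zero, esymm_add_replicate_zero] at h

end Multiset

section ShiftWeight

variable {V R : Type*} [DecidableEq V] [AddCommMonoid R] {x : V → R} {u v w : V}

def shiftWeight (x : V → R) (u v : V) : V → R :=
  Function.update (Function.update x u 0) v (x u + x v)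

theorem shiftWeight_left (huv : u ≠ v) : shiftWeight x u v u = 0 := by
  simp [shiftWeight, huv]

theorem shiftWeight_right : shiftWeight x u v v = x u + x v := by
  simp [shiftWeight]

theorem shiftWeight_of_ne (hwu : w ≠ u) (hwv : w ≠ v) : shiftWeight x u v w = x w := by
  simp [shiftWeight, hwu, hwv]

theorem shiftWeight_nonneg [PartialOrder R] [IsOrderedAddMonoid R] (hx : ∀ w, 0 ≤ x w)
    (u v w : V) : 0 ≤ shiftWeight x u v w := by
  unfold shiftWeight
  simp only [Function.update_apply]
  split_ifs
  exacts [add_nonneg (hx u) (hx v), le_rfl, hx w]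

variable [Fintype V]

theorem sum_shiftWeight (huv : u ≠ v) : ∑ w, shiftWeight x u v w = ∑ w, x w := by
  rw [← sum_sdiff (subset_univ {u, v}), ← sum_sdiff (subset_univ {u, v}), sum_pair huv,
    sum_pair huv, shiftWeight_left huv, shiftWeight_right, zero_add]
  congr 1
  refine sum_congr rfl fun w hw => ?_
  simp only [mem_sdiff, mem_insert, mem_singleton, not_or] at hw
  exact shiftWeight_of_ne hw.2.1 hw.2.2

theorem card_support_shiftWeight_lt [DecidableEq R] (huv : u ≠ v) (hu : x u ≠ 0)
    (hv : x v ≠ 0) : #{w | shiftWeight x u v w ≠ 0} < #{w | x w ≠ 0} := by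
  refine card_lt_card <| (ssubset_iff_of_subset fun w hw => ?_).2
    ⟨u, mem_filter.2 ⟨mem_univ u, hu⟩, fun h => (mem_filter.1 h).2 (shiftWeight_left huv)⟩
  replace hw := (mem_filter.1 hw).2
  refine mem_filter.2 ⟨mem_univ w, ?_⟩
  by_cases hwu : w = u
  · subst hwu
    exact absurd (shiftWeight_left huv) hw
  by_cases hwv : w = v
  · exact hwv ▸ hv
  · rwa [shiftWeight_of_ne hwu hwv] at hw

end ShiftWeight

section ShiftWeightProd

variable {V R : Type*} [DecidableEq V] [CommSemiring R] {x : V → R} {u v : V} {s : Finset V}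

theorem prod_shiftWeight_of_notMem (hu : u ∉ s) (hv : v ∉ s) :
    ∏ w ∈ s, shiftWeight x u v w = ∏ w ∈ s, x w :=
  prod_congr rfl fun _ hw => shiftWeight_of_ne (ne_of_mem_of_not_mem hw hu)
    (ne_of_mem_of_not_mem hw hv)

theorem prod_shiftWeight_of_mem_left (huv : u ≠ v) (hu : u ∈ s) :
    ∏ w ∈ s, shiftWeight x u v w = 0 :=
  prod_eq_zero hu (shiftWeight_left huv)

theorem prod_shiftWeight_of_mem_right (hu : u ∉ s) (hv : v ∈ s) :
    ∏ w ∈ s, shiftWeight x u v w = (x u + x v) * ∏ w ∈ s.erase v, x w := by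
  rw [← mul_prod_erase s _ hv, shiftWeight_right,
    prod_shiftWeight_of_notMem (fun h => hu (mem_of_mem_erase h)) (notMem_erase v s)]

theorem add_mul_prod_eq_shiftWeight (huv : u ≠ v) (hs : ¬ (u ∈ s ∧ v ∈ s)) :
    (x u + x v) * ∏ w ∈ s, x w
      = x v * ∏ w ∈ s, shiftWeight x u v w + x u * ∏ w ∈ s, shiftWeight x v u w := by
  by_cases hu : u ∈ s
  · have hv : v ∉ s := fun hv => hs ⟨hu, hv⟩
    rw [prod_shiftWeight_of_mem_left huv hu, prod_shiftWeight_of_mem_right hv hu,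
      ← mul_prod_erase s x hu]
    ring
  by_cases hv : v ∈ s
  · rw [prod_shiftWeight_of_mem_left huv.symm hv, prod_shiftWeight_of_mem_right hu hv,
      ← mul_prod_erase s x hv]
    ring
  · rw [prod_shiftWeight_of_notMem hu hv, prod_shiftWeight_of_notMem hv hu]
    ring

end ShiftWeightProd

section WeightedIndepCount

variable {V R : Type*} [Fintype V] {G : SimpleGraph V} {x : V → R} {u v : V}

open Classical in
noncomputable def weightedIndepCount [CommSemiring R] (G : SimpleGraph V) (x : V → R) (k : ℕ) :
    R :=
  ∑ s ∈ univ.filter (fun s : Finset V => s.card = k ∧ IsIndepFinset G s), ∏ v ∈ s, x v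

theorem weightedIndepCount_one [CommSemiring R] (G : SimpleGraph V) (k : ℕ) :
    weightedIndepCount G (fun _ => (1 : R)) k = indepCount G k := by
  simp [weightedIndepCount, indepCount]

theorem weightedIndepCount_eq_esymm [CommSemiring R] {T : Finset V} (hT : IsIndepFinset G T)
    (hx : ∀ v ∉ T, x v = 0) (k : ℕ) :
    weightedIndepCount G x k = (T.val.map x).esymm k := by
  classical
  rw [Finset.esymm_map_val, weightedIndepCount]
  refine (sum_subset (fun t ht => ?_) fun t ht htT => ?_).symm
  · obtain ⟨htT, htk⟩ := mem_powersetCard.1 ht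
    exact mem_filter.2 ⟨mem_univ t, htk, fun a ha b hb => hT a (htT ha) b (htT hb)⟩
  · have : ¬ t ⊆ T := fun h => htT (mem_powersetCard.2 ⟨h, (mem_filter.1 ht).2.1⟩)
    obtain ⟨v, hvt, hvT⟩ := not_subset.1 this
    exact prod_eq_zero hvt (hx v hvT)

theorem add_mul_weightedIndepCount [CommSemiring R] [DecidableEq V] (huv : G.Adj u v) (k : ℕ) :
    (x u + x v) * weightedIndepCount G x k
      = x v * weightedIndepCount G (shiftWeight x u v) k
        + x u * weightedIndepCount G (shiftWeight x v u) k := by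
  classical
  simp only [weightedIndepCount, mul_sum, ← sum_add_distrib]
  refine sum_congr rfl fun s hs => add_mul_prod_eq_shiftWeight huv.ne fun h => ?_
  exact (mem_filter.1 hs).2.2 u h.1 v h.2 huv

variable [Field R] [LinearOrder R] [IsStrictOrderedRing R] {α : ℕ}

theorem weightedIndepCount_le_of_shiftWeight [DecidableEq V] (huv : G.Adj u v) (hu : 0 ≤ x u)
    (hv : 0 ≤ x v) (hpos : 0 < x u + x v) {a b : R} {i j : ℕ}
    (h₁ : a * weightedIndepCount G (shiftWeight x u v) i
      ≤ b * (∑ w, shiftWeight x u v w) * weightedIndepCount G (shiftWeight x u v) j)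
    (h₂ : a * weightedIndepCount G (shiftWeight x v u) i
      ≤ b * (∑ w, shiftWeight x v u w) * weightedIndepCount G (shiftWeight x v u) j) :
    a * weightedIndepCount G x i ≤ b * (∑ w, x w) * weightedIndepCount G x j := by
  rw [sum_shiftWeight huv.ne] at h₁
  rw [sum_shiftWeight huv.ne.symm] at h₂
  refine le_of_mul_le_mul_left ?_ hpos
  linear_combination x v * h₁ + x u * h₂ + a * add_mul_weightedIndepCount (x := x) huv i
    - b * (∑ w, x w) * add_mul_weightedIndepCount (x := x) huv j

theorem card_mul_weightedIndepCount_succ_le_of_isIndepFinset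
    (hα : ∀ s, IsIndepFinset G s → s.card ≤ α) (hx : ∀ v, 0 ≤ x v)
    (hT : IsIndepFinset G {v | x v ≠ 0}) (k : ℕ) :
    (α : R) * (k + 1) * weightedIndepCount G x (k + 1)
      ≤ (α - k) * (∑ v, x v) * weightedIndepCount G x k := by
  have hzero : ∀ v ∉ ({v | x v ≠ 0} : Finset V), x v = 0 := by simp
  have hsum : ∑ v, x v = (({v | x v ≠ 0} : Finset V).val.map x).esymm 1 := by
    rw [Multiset.esymm_one_right, sum_map_val, sum_filter_ne_zero]
  rw [weightedIndepCount_eq_esymm hT hzero, weightedIndepCount_eq_esymm hT hzero, hsum]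
  refine Multiset.card_mul_esymm_succ_le_of_card_le ?_ ?_ k
  · simpa using fun v _ => hx v
  · rw [Multiset.card_map]
    exact hα _ hT

theorem card_mul_weightedIndepCount_succ_le (hα : ∀ s, IsIndepFinset G s → s.card ≤ α)
    (hx : ∀ v, 0 ≤ x v) (k : ℕ) :
    (α : R) * (k + 1) * weightedIndepCount G x (k + 1)
      ≤ (α - k) * (∑ v, x v) * weightedIndepCount G x k := by
  classical
  induction hN : #{v | x v ≠ 0} using Nat.strong_induction_on generalizing x with
  | _ N ih =>
    by_cases hT : IsIndepFinset G {v | x v ≠ 0}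
    · exact card_mul_weightedIndepCount_succ_le_of_isIndepFinset hα hx hT k
    obtain ⟨u, v, hu, hv, huv⟩ : ∃ u v, x u ≠ 0 ∧ x v ≠ 0 ∧ G.Adj u v := by
      simpa [IsIndepFinset] using hT
    exact weightedIndepCount_le_of_shiftWeight huv (hx u) (hx v)
      (add_pos_of_pos_of_nonneg ((hx u).lt_of_ne' hu) (hx v))
      (ih _ (hN ▸ card_support_shiftWeight_lt huv.ne hu hv) (shiftWeight_nonneg hx u v) rfl)
      (ih _ (hN ▸ card_support_shiftWeight_lt huv.ne.symm hv hu) (shiftWeight_nonneg hx v u) rfl)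

end WeightedIndepCount

theorem sub_mul_le_mul_succ_of_natCeil_le {α n l : ℕ}
    (hl : ⌈((α * (n - 1) : ℕ) : ℚ) / (α + n)⌉₊ ≤ l) : ((α : ℚ) - l) * n ≤ α * (l + 1) := by
  obtain rfl | hn := n.eq_zero_or_pos
  · simp only [Nat.cast_zero, mul_zero]
    positivity
  have h := (div_le_iff₀ (by positivity)).1 (Nat.ceil_le.1 hl)
  push_cast [Nat.cast_pred hn] at h
  linarith

theorem indepCount_succ_le_of_natCeil_le {V : Type*} [Fintype V] {G : SimpleGraph V} {α l : ℕ}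
    (hα : ∀ s, IsIndepFinset G s → s.card ≤ α)
    (hl : ⌈((α * (Fintype.card V - 1) : ℕ) : ℚ) / (α + Fintype.card V)⌉₊ ≤ l) (hlα : l < α) :
    indepCount G (l + 1) ≤ indepCount G l := by
  have hW := card_mul_weightedIndepCount_succ_le (R := ℚ) hα (fun _ => zero_le_one) l
  simp only [weightedIndepCount_one, sum_const, card_univ, nsmul_eq_mul, mul_one] at hW
  have hth := sub_mul_le_mul_succ_of_natCeil_le hl
  have hpos : (0 : ℚ) < α * (l + 1) := by
    have : (0 : ℚ) < α := by exact_mod_cast (by omega : 0 < α)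
    positivity
  exact_mod_cast le_of_mul_le_mul_left
    (hW.trans (mul_le_mul_of_nonneg_right hth (Nat.cast_nonneg _))) hpos

theorem stmt_0 {V : Type*} [Fintype V] (G : SimpleGraph V) (n α : ℕ)
    (hn : n = Fintype.card V)
    (hα : IsGreatest {m | ∃ s : Finset V, IsIndepFinset G s ∧ s.card = m} α) :
    ∀ k l : ℕ, ⌈((α * (n - 1) : ℕ) : ℚ) / (α + n)⌉₊ ≤ k → k ≤ l → l ≤ α →
      indepCount G l ≤ indepCount G k := by
  subst hn
  have hanti : AntitoneOn (indepCount G)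
      (Set.Icc ⌈((α * (Fintype.card V - 1) : ℕ) : ℚ) / (α + Fintype.card V)⌉₊ α) :=
    antitoneOn_of_succ_le Set.ordConnected_Icc fun j _ hj hj₁ =>
      indepCount_succ_le_of_natCeil_le (fun s hs => hα.2 ⟨s, hs, rfl⟩) hj.1 hj₁.2
  intro k l hk hkl hlα
  exact hanti ⟨hk, hkl.trans hlα⟩ ⟨hk.trans hkl, hlα⟩ hkl
end

section
/- If every maximal (by inclusion) independent set of a graph G has size at least λ, then the initial portion (i_0, i_1, ..., i_{⌈λ/2⌉}) of the independent set sequence of G is non-decreasing. -/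
/-!
Double counting the inclusions `A ⊆ B` between independent sets with `#A = k - 1` and `#B = k`:
each such `B` contains only `k` sets of size `k - 1`, while each such `A` lies in a maximal
independent set `M` with `#M ≥ λ ≥ 2k - 1`, and adding any of the `#M - (k - 1) ≥ k` vertices of
`M \ A` to `A` gives `k` distinct sets `B` above it. Hence `k · i_{k-1} ≤ k · i_k`.
-/

open Finset

section IndepFinsets

variable {V : Type*} {G : SimpleGraph V}

lemma IsIndepFinset.mono {s t : Finset V} (ht : IsIndepFinset G t) (hst : s ⊆ t) :
    IsIndepFinset G s :=
  fun a ha b hb => ht a (hst ha) b (hst hb)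

lemma le_card_of_maximal_isIndepFinset {lam : ℕ}
    (hmax : ∀ s : Finset V, IsIndepFinset G s →
      (∀ t : Finset V, IsIndepFinset G t → s ⊆ t → s = t) → lam ≤ s.card)
    {M : Finset V} (hM : Maximal (IsIndepFinset G) M) : lam ≤ #M :=
  hmax M hM.1 fun _ ht hMt => le_antisymm hMt (hM.2 ht hMt)

variable [Fintype V]

open Classical in
noncomputable def indepFinsetsOfCard (G : SimpleGraph V) (k : ℕ) : Finset (Finset V) :=
  univ.filter fun s : Finset V => s.card = k ∧ IsIndepFinset G s

lemma indepCount_eq_card_indepFinsetsOfCard (k : ℕ) :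
    indepCount G k = #(indepFinsetsOfCard G k) :=
  rfl

lemma mem_indepFinsetsOfCard {k : ℕ} {s : Finset V} :
    s ∈ indepFinsetsOfCard G k ↔ #s = k ∧ IsIndepFinset G s := by
  simp [indepFinsetsOfCard]

lemma card_sdiff_le_card_bipartiteAbove_indepFinsetsOfCard [DecidableEq V] {s M : Finset V}
    (hM : IsIndepFinset G M) (hsM : s ⊆ M) :
    #(M \ s) ≤ #((indepFinsetsOfCard G (#s + 1)).bipartiteAbove (· ⊆ ·) s) := by
  refine card_le_card_of_injOn (insert · s) (fun v hv => ?_) (fun v hv w hw hvw => ?_)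
  · rw [mem_coe, mem_sdiff] at hv
    rw [mem_coe, mem_bipartiteAbove, mem_indepFinsetsOfCard, card_insert_of_notMem hv.2]
    exact ⟨⟨rfl, hM.mono (insert_subset hv.1 hsM)⟩, subset_insert v s⟩
  · exact (insert_inj (mem_sdiff.mp hv).2).mp hvw

end IndepFinsets

lemma card_bipartiteBelow_subset_le_choose {α : Type*} [DecidableEq α] {𝒜 : Finset (Finset α)} {r : ℕ}
    (h𝒜 : (𝒜 : Set (Finset α)).Sized r) (t : Finset α) :
    #(𝒜.bipartiteBelow (· ⊆ ·) t) ≤ (#t).choose r := by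
  rw [← card_powersetCard]
  refine card_le_card fun s hs => ?_
  rw [mem_bipartiteBelow] at hs
  exact mem_powersetCard.mpr ⟨hs.2, h𝒜 hs.1⟩

theorem stmt_1 {V : Type*} [Fintype V] (G : SimpleGraph V) (lam : ℕ)
    (hmax : ∀ s : Finset V, IsIndepFinset G s →
      (∀ t : Finset V, IsIndepFinset G t → s ⊆ t → s = t) → lam ≤ s.card) :
    ∀ k : ℕ, 1 ≤ k → k ≤ ⌈(lam : ℚ) / 2⌉₊ →
      indepCount G (k - 1) ≤ indepCount G k := by
  classical
  intro k hk hk_le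
  obtain ⟨j, rfl⟩ : ∃ j, k = j + 1 := ⟨k - 1, by omega⟩
  have hlam : 2 * j < lam := by
    have : (j : ℚ) < lam / 2 := Nat.lt_ceil.mp hk_le
    exact_mod_cast (by linarith : (2 * j : ℚ) < lam)
  simp only [indepCount_eq_card_indepFinsetsOfCard, Nat.add_sub_cancel]
  refine Nat.le_of_mul_le_mul_right (card_mul_le_card_mul (· ⊆ ·) ?_ ?_) j.succ_pos
  · intro s hs
    obtain ⟨hs_card, hs_indep⟩ := mem_indepFinsetsOfCard.mp hs
    obtain ⟨M, hsM, hM⟩ := Finite.exists_le_maximal hs_indep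
    have hM_card := le_card_of_maximal_isIndepFinset hmax hM
    calc j + 1 ≤ #(M \ s) := by rw [card_sdiff_of_subset hsM]; omega
      _ ≤ _ := hs_card ▸ card_sdiff_le_card_bipartiteAbove_indepFinsetsOfCard hM.1 hsM
  · intro t ht
    calc _ ≤ (#t).choose j :=
          card_bipartiteBelow_subset_le_choose (fun s hs => (mem_indepFinsetsOfCard.mp hs).1) t
      _ = j + 1 := by rw [(mem_indepFinsetsOfCard.mp ht).1, Nat.choose_succ_self_right]
end

section
/- Let T be a tree with n vertices and maximum independent set size α. Then every maximal independent set in T has size at least ⌈(n-α+1)/2⌉. -/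
/-!
Let `K` be a maximal independent set and `C = V \ K`. Since `K` dominates, every `v ∈ C` has a
neighbour `f v ∈ K`, and the edges `v — f v` are distinct and leave `C`. Deleting one endpoint of
each edge inside `C` leaves an independent set, so `|C| ≤ α + e(C)`. Counting edges of the tree,
`|C| + e(C) ≤ n - 1`, hence `2 |C| ≤ α + n - 1`, i.e. `n - α + 1 ≤ 2 |K|`.
-/

open Finset

namespace SimpleGraph

variable {V : Type*} [DecidableEq V] (G : SimpleGraph V)

theorem exists_adj_of_maximal_isIndepFinset {K : Finset V} (hK : IsIndepFinset G K)
    (hmax : ∀ t : Finset V, IsIndepFinset G t → K ⊆ t → K = t) {v : V} (hv : v ∉ K) :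
    ∃ u ∈ K, G.Adj u v := by
  by_contra! h
  have hins : IsIndepFinset G (insert v K) := by
    intro a ha b hb
    rcases mem_insert.1 ha with rfl | haK <;> rcases mem_insert.1 hb with rfl | hbK
    · exact G.irrefl
    · exact fun hadj => h b hbK hadj.symm
    · exact h a haK
    · exact hK a haK b hbK
  exact hv ((hmax _ hins (subset_insert v K)) ▸ mem_insert_self v K)

variable [Fintype G.edgeSet]

theorem exists_isIndepFinset_subset_card_le (s : Finset V) :
    ∃ t ⊆ s, IsIndepFinset G t ∧ #s ≤ #t + #(G.edgeFinset ∩ s.sym2) := by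
  induction s using Finset.strongInduction with
  | _ s ih =>
    by_cases hs : IsIndepFinset G s
    · exact ⟨s, subset_rfl, hs, Nat.le_add_right _ _⟩
    simp only [IsIndepFinset, not_forall, not_not] at hs
    obtain ⟨a, ha, b, hb, hab⟩ := hs
    obtain ⟨t, hts, ht, hcard⟩ := ih (s.erase a) (erase_ssubset ha)
    have hab_mem : s(a, b) ∈ G.edgeFinset ∩ s.sym2 :=
      mem_inter.2 ⟨G.mem_edgeFinset.2 hab, mk_mem_sym2_iff.2 ⟨ha, hb⟩⟩
    have hab_not_mem : s(a, b) ∉ G.edgeFinset ∩ (s.erase a).sym2 := fun h =>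
      notMem_erase a s (mk_mem_sym2_iff.1 (mem_inter.1 h).2).1
    have hedges : #(G.edgeFinset ∩ (s.erase a).sym2) < #(G.edgeFinset ∩ s.sym2) :=
      card_lt_card <| Finset.ssubset_iff_subset_ne.2
        ⟨inter_subset_inter_left (sym2_mono (erase_subset a s)),
          fun h => hab_not_mem (h ▸ hab_mem)⟩
    have hs_card : #(s.erase a) + 1 = #s := card_erase_add_one ha
    exact ⟨t, hts.trans (erase_subset a s), ht, by omega⟩

variable [Fintype V]

theorem card_compl_add_card_edges_compl_le {K : Finset V}
    (hdom : ∀ v ∉ K, ∃ u ∈ K, G.Adj u v) :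
    #Kᶜ + #(G.edgeFinset ∩ Kᶜ.sym2) ≤ #G.edgeFinset := by
  choose! f hfK hfadj using hdom
  have hmaps : ∀ v ∈ Kᶜ, s(v, f v) ∈ G.edgeFinset \ Kᶜ.sym2 := by
    intro v hv
    have hv : v ∉ K := mem_compl.1 hv
    simp only [mem_sdiff, mem_edgeFinset, mem_edgeSet,
      mk_mem_sym2_iff, mem_compl, not_and, not_not]
    exact ⟨(hfadj v hv).symm, fun _ => hfK v hv⟩
  have hinj : Set.InjOn (fun v => s(v, f v)) (Kᶜ : Finset V) := by
    intro x hx y hy hxy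
    rcases Sym2.eq_iff.1 hxy with ⟨rfl, -⟩ | ⟨hxfy, -⟩
    · rfl
    · exact absurd (hxfy ▸ hfK y (mem_compl.1 (mem_coe.1 hy))) (mem_compl.1 (mem_coe.1 hx))
  calc #Kᶜ + #(G.edgeFinset ∩ Kᶜ.sym2)
      ≤ #(G.edgeFinset \ Kᶜ.sym2) + #(G.edgeFinset ∩ Kᶜ.sym2) :=
        Nat.add_le_add_right (card_le_card_of_injOn _ (fun v hv => hmaps v hv) hinj) _
    _ = #G.edgeFinset := card_sdiff_add_card_inter _ _

theorem two_mul_card_compl_le_of_maximal_isIndepFinset {α : ℕ}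
    (hα : ∀ s : Finset V, IsIndepFinset G s → #s ≤ α) {K : Finset V}
    (hK : IsIndepFinset G K) (hmax : ∀ t : Finset V, IsIndepFinset G t → K ⊆ t → K = t) :
    2 * #Kᶜ ≤ α + #G.edgeFinset := by
  obtain ⟨t, -, ht, hcard⟩ := G.exists_isIndepFinset_subset_card_le Kᶜ
  have hedges := G.card_compl_add_card_edges_compl_le fun v hv =>
    G.exists_adj_of_maximal_isIndepFinset hK hmax hv
  have := hα t ht
  omega

end SimpleGraph

theorem stmt_2 {V : Type*} [Fintype V] (T : SimpleGraph V) (hT : T.IsTree) (n α : ℕ)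
    (hn : n = Fintype.card V)
    (hα : IsGreatest {m | ∃ s : Finset V, IsIndepFinset T s ∧ s.card = m} α) :
    ∀ K : Finset V, IsIndepFinset T K →
      (∀ t : Finset V, IsIndepFinset T t → K ⊆ t → K = t) →
      ⌈((n - α + 1 : ℕ) : ℚ) / 2⌉₊ ≤ K.card := by
  classical
  intro K hK hmax
  have hα_le : ∀ s : Finset V, IsIndepFinset T s → #s ≤ α := fun s hs => hα.2 ⟨s, hs, rfl⟩
  have hα_le_n : α ≤ n := by
    obtain ⟨s, -, rfl⟩ := hα.1
    exact hn ▸ card_le_univ s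
  have hbound := T.two_mul_card_compl_le_of_maximal_isIndepFinset hα_le hK hmax
  have hedges : #T.edgeFinset + 1 = n := hn ▸ hT.card_edgeFinset
  have hcompl : #Kᶜ + #K = n := hn ▸ card_compl_add_card K
  have key : n - α + 1 ≤ 2 * #K := by omega
  rw [Nat.ceil_le, div_le_iff₀ two_pos]
  exact_mod_cast key.trans_eq (mul_comm _ _)
end

section
/- Let T be a tree with n vertices and maximum independent set size α, and let i_k be the number of independent sets of size k in T. Then i_{k-1} ≤ i_k for all k ≤ ⌈(n-α+1)/4⌉. -/
open Finset

/-!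
Root the tree at `r` and call `y` the parent of its neighbour `x` when `y` is closer to `r`;
every vertex has at most one parent. Fix an independent `(k-1)`-set `S`. Every vertex outside
the closed neighbourhood `N[S]` extends `S` to an independent `k`-set. A vertex of `N(S) \ S`
that is not the parent of a vertex of `S` has its parent in `S`, so these vertices form an
independent set, while at most `|S|` vertices are parents of vertices of `S`. Hence
`n ≤ α + #(V \ N[S]) + 2|S|`, and `n - α ≥ 4(k-1)` leaves at least `2(k-1) ≥ k` extensions
(for `k = 1` every vertex is one). Counting pairs `S ⊂ S'` of independent sets of sizes `k-1`
and `k` then gives `k i_{k-1} ≤ k i_k`.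
-/

namespace SimpleGraph

variable {V : Type*} {T : SimpleGraph V}

theorem IsAcyclic.mem_support_of_adj_of_dist_eq_add_one (hT : T.IsAcyclic) {r x y : V}
    {p : T.Walk r x} (hp : p.IsPath) (hxy : T.Adj x y) (hd : T.dist r x = T.dist r y + 1) :
    y ∈ p.support := by
  classical
  obtain ⟨q, hq, hql⟩ := (p.reachable.trans hxy.reachable).exists_path_of_dist
  refine hT.mem_support_of_ne_mem_support_of_adj_of_isPath hp hq hxy fun hx => ?_
  have : T.dist r x ≤ q.length :=
    (dist_le _).trans (q.length_takeUntil_le_length hx)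
  omega

theorem IsAcyclic.eq_of_adj_of_dist_eq_add_one (hT : T.IsAcyclic) {r x y y' : V}
    (hr : T.Reachable r x) (hy : T.Adj x y) (hy' : T.Adj x y')
    (hd : T.dist r x = T.dist r y + 1) (hd' : T.dist r x = T.dist r y' + 1) : y = y' := by
  obtain ⟨p, hp, -⟩ := hr.exists_path_of_dist
  rw [hT.eq_penultimate_of_adj_end hp hy (hT.mem_support_of_adj_of_dist_eq_add_one hp hy hd),
    hT.eq_penultimate_of_adj_end hp hy' (hT.mem_support_of_adj_of_dist_eq_add_one hp hy' hd')]

variable [Fintype V]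

open Classical in
noncomputable def undominated (G : SimpleGraph V) (S : Finset V) : Finset V :=
  {w | w ∉ S ∧ ∀ s ∈ S, ¬ G.Adj s w}

theorem mem_undominated {G : SimpleGraph V} {S : Finset V} {w : V} :
    w ∈ G.undominated S ↔ w ∉ S ∧ ∀ s ∈ S, ¬ G.Adj s w := by
  simp [undominated]

theorem isIndepFinset_insert_of_mem_undominated [DecidableEq V]
    {G : SimpleGraph V} {S : Finset V} {w : V}
    (hS : IsIndepFinset G S) (hw : w ∈ G.undominated S) : IsIndepFinset G (insert w S) := by
  rw [mem_undominated] at hw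
  intro a ha b hb hab
  rcases mem_insert.mp ha with rfl | haS <;> rcases mem_insert.mp hb with rfl | hbS
  · exact G.irrefl hab
  · exact hw.2 b hbS hab.symm
  · exact hw.2 a haS hab
  · exact hS a haS b hbS hab

theorem IsTree.exists_isIndepFinset_card_add (hT : T.IsTree) (S : Finset V) :
    ∃ X : Finset V, IsIndepFinset T X ∧
      Fintype.card V ≤ #X + #(T.undominated S) + 2 * #S := by
  classical
  obtain ⟨r⟩ := hT.connected.nonempty
  let IsParent : V → V → Prop := fun y x => T.Adj x y ∧ T.dist r x = T.dist r y + 1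
  have parent_unique {x y y'} (hy : IsParent y x) (hy' : IsParent y' x) : y = y' :=
    hT.isAcyclic.eq_of_adj_of_dist_eq_add_one (hT.connected r x) hy.1 hy'.1 hy.2 hy'.2
  set P : Finset V := {y | ∃ s ∈ S, IsParent y s}
  set X : Finset V := univ \ (S ∪ T.undominated S ∪ P)
  have hP : #P ≤ #S := card_le_card_of_forall_subsingleton IsParent
    (fun y hy => by simpa [P] using hy)
    (fun s _ y hy y' hy' => parent_unique hy.2 hy'.2)
  have parent_mem {x y} (hx : x ∈ X) (hy : IsParent y x) : y ∈ S := by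
    simp only [X, P, mem_sdiff, mem_union, mem_undominated, mem_filter, mem_univ, true_and,
      not_or, not_and, not_forall, not_not, not_exists] at hx
    obtain ⟨⟨hxS, hxD⟩, hxP⟩ := hx
    obtain ⟨s, hs, hsx⟩ := hxD hxS
    rcases hT.dist_eq_dist_add_one_of_adj r hsx with hd | hd
    · exact absurd ⟨hsx, hd⟩ (hxP s hs)
    · exact parent_unique hy ⟨hsx.symm, hd⟩ ▸ hs
  refine ⟨X, fun a ha b hb hab => ?_, ?_⟩
  · have hXS {x} (hx : x ∈ X) : x ∉ S := by simp_all [X]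
    rcases hT.dist_eq_dist_add_one_of_adj r hab with hd | hd
    · exact hXS hb (parent_mem ha ⟨hab, hd⟩)
    · exact hXS ha (parent_mem hb ⟨hab.symm, hd⟩)
  · calc Fintype.card V = #(X ∪ (S ∪ T.undominated S ∪ P)) := by
          rw [sdiff_union_of_subset (subset_univ _), card_univ]
      _ ≤ #X + (#S + #(T.undominated S) + #P) := by
          grw [card_union_le, card_union_le, card_union_le]
      _ ≤ #X + #(T.undominated S) + 2 * #S := by omega

theorem indepCount_le_indepCount_succ (G : SimpleGraph V) (k : ℕ)
    (h : ∀ S : Finset V, IsIndepFinset G S → #S = k → k + 1 ≤ #(G.undominated S)) :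
    indepCount G k ≤ indepCount G (k + 1) := by
  classical
  unfold indepCount
  refine Nat.le_of_mul_le_mul_right (card_mul_le_card_mul (· ⊆ ·) ?_ ?_) k.succ_pos
  · intro S hS
    obtain ⟨-, hSk, hSind⟩ := mem_filter.mp hS
    have hinj : Set.InjOn (insert · S) (G.undominated S) := fun w hw w' _ hww' => by
      have hwS := (mem_undominated.mp hw).1
      have : w ∈ insert w' S := (show insert w S = insert w' S from hww') ▸ mem_insert_self w S
      exact (mem_insert.mp this).resolve_right hwS
    refine (h S hSind hSk).trans ((card_image_of_injOn hinj).ge.trans (card_le_card ?_))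
    intro S' hS'
    obtain ⟨w, hw, rfl⟩ := mem_image.mp hS'
    refine (mem_bipartiteAbove _).mpr ⟨mem_filter.mpr ⟨mem_univ _, ?_, ?_⟩, subset_insert w S⟩
    · rw [card_insert_of_notMem (mem_undominated.mp hw).1, hSk]
    · exact isIndepFinset_insert_of_mem_undominated hSind hw
  · intro S' hS'
    have hS'k := (mem_filter.mp hS').2.1
    calc #(_ : Finset (Finset V)) ≤ #(S'.powersetCard k) := card_le_card fun S hS => by
          obtain ⟨hS, hSS'⟩ := (mem_bipartiteBelow _).mp hS
          exact mem_powersetCard.mpr ⟨hSS', (mem_filter.mp hS).2.1⟩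
      _ = k + 1 := by rw [card_powersetCard, hS'k, Nat.choose_succ_self_right]

end SimpleGraph

theorem four_mul_le_of_succ_le_ceil_div_four {m k : ℕ}
    (h : k + 1 ≤ ⌈((m + 1 : ℕ) : ℚ) / 4⌉₊) : 4 * k ≤ m := by
  have hk : (k : ℚ) < ((m + 1 : ℕ) : ℚ) / 4 := Nat.lt_ceil.mp h
  have : ((4 * k : ℕ) : ℚ) < ((m + 1 : ℕ) : ℚ) := by push_cast at hk ⊢; linarith
  exact Nat.lt_succ_iff.mp (by exact_mod_cast this)

theorem stmt_3 {V : Type*} [Fintype V] (T : SimpleGraph V) (hT : T.IsTree) (n α : ℕ)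
    (hn : n = Fintype.card V)
    (hα : IsGreatest {m | ∃ s : Finset V, IsIndepFinset T s ∧ s.card = m} α) :
    ∀ k : ℕ, 1 ≤ k → k ≤ ⌈((n - α + 1 : ℕ) : ℚ) / 4⌉₊ →
      indepCount T (k - 1) ≤ indepCount T k := by
  rintro (_ | j) hk hkn
  · omega
  have hj : 4 * j ≤ n - α := four_mul_le_of_succ_le_ceil_div_four hkn
  refine T.indepCount_le_indepCount_succ j fun S _ hSj => ?_
  obtain ⟨X, hX, hcard⟩ := hT.exists_isIndepFinset_card_add S
  have hXα : #X ≤ α := hα.2 ⟨X, hX, rfl⟩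
  rcases j.eq_zero_or_pos with rfl | hj0
  · obtain ⟨v⟩ := hT.connected.nonempty
    exact card_pos.mpr ⟨v, SimpleGraph.mem_undominated.mpr (by simp [card_eq_zero.mp hSj])⟩
  · omega
end

section
/- For all natural numbers N, k and any commutative ring element z, Σ_{ℓ=0}^{N} C(N,ℓ) ℓ^k z^ℓ = Σ_{j=0}^{k} S(k,j) · (N)_j · (1+z)^{N-j} · z^j, where S(k,j) is a Stirling number of the second kind and (N)_j = N(N-1)···(N-j+1) is a falling factorial. -/
/-!
Expand `l ^ k` in the falling-factorial basis, `l ^ k = ∑ j, S(k, j) (l)_j`, which follows from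
`X * (X)_j = (X)_(j+1) + j (X)_j` and the Stirling recursion. After swapping the sums it remains to
evaluate `∑ l, C(N, l) (l)_j z ^ l`; since `C(N, j + m) (j + m)_j = (N)_j C(N - j, m)`, this is
`(N)_j z ^ j` times the binomial expansion of `(1 + z) ^ (N - j)`.
-/

open Finset

/-- Stirling numbers of the second kind: `stirling2 k j` is the number of partitions of a
`k`-element set into `j` nonempty blocks. -/
def stirling2 : ℕ → ℕ → ℕ
  | 0, 0 => 1
  | 0, _ + 1 => 0
  | _ + 1, 0 => 0
  | k + 1, j + 1 => (j + 1) * stirling2 k (j + 1) + stirling2 k j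

open Polynomial

theorem stirling2_eq_stirlingSecond : ∀ k j : ℕ, stirling2 k j = Nat.stirlingSecond k j
  | 0, 0 | 0, _ + 1 | _ + 1, 0 => rfl
  | k + 1, j + 1 => by
    rw [stirling2, Nat.stirlingSecond_succ_succ, stirling2_eq_stirlingSecond k (j + 1),
      stirling2_eq_stirlingSecond k j]

theorem Polynomial.X_pow_eq_sum_stirlingSecond_mul_descPochhammer (R : Type*) [CommRing R]
    (k : ℕ) :
    (X : R[X]) ^ k =
      ∑ j ∈ range (k + 1), (Nat.stirlingSecond k j : R[X]) * descPochhammer R j := by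
  induction k with
  | zero => simp
  | succ k ih =>
    have hX : ∀ j : ℕ, descPochhammer R j * X =
        descPochhammer R (j + 1) + (j : R[X]) * descPochhammer R j := fun j => by
      rw [descPochhammer_succ_right]; ring
    have hshift : ∑ j ∈ range (k + 1), (j * Nat.stirlingSecond k j : R[X]) * descPochhammer R j =
        ∑ j ∈ range (k + 1),
          ((j + 1) * Nat.stirlingSecond k (j + 1) : R[X]) * descPochhammer R (j + 1) := by
      rw [sum_range_succ', sum_range_succ, Nat.stirlingSecond_eq_zero_of_lt k.lt_succ_self]
      simp
    calc (X : R[X]) ^ (k + 1)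
        = ∑ j ∈ range (k + 1), (Nat.stirlingSecond k j : R[X]) *
            (descPochhammer R (j + 1) + (j : R[X]) * descPochhammer R j) := by
          simp only [pow_succ, ih, sum_mul, mul_assoc, hX]
      _ = ∑ j ∈ range (k + 1), (Nat.stirlingSecond k j : R[X]) * descPochhammer R (j + 1) +
            ∑ j ∈ range (k + 1),
              ((j + 1) * Nat.stirlingSecond k (j + 1) : R[X]) * descPochhammer R (j + 1) := by
          rw [← hshift, ← sum_add_distrib]
          refine sum_congr rfl fun j _ => by ring
      _ = ∑ j ∈ range (k + 1 + 1), (Nat.stirlingSecond (k + 1) j : R[X]) * descPochhammer R j := by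
          rw [sum_range_succ' _ (k + 1), ← sum_add_distrib]
          simp only [Nat.stirlingSecond_succ_succ, Nat.stirlingSecond_succ_zero]
          push_cast
          simp only [zero_mul, add_zero]
          refine sum_congr rfl fun j _ => by ring

theorem Nat.cast_pow_eq_sum_stirlingSecond_mul_descFactorial {R : Type*} [CommRing R]
    (n k : ℕ) :
    (n : R) ^ k = ∑ j ∈ range (k + 1), (Nat.stirlingSecond k j : R) * (n.descFactorial j : R) := by
  simpa [eval_finsetSum, descPochhammer_eval_eq_descFactorial] using
    congrArg (eval (n : R)) (Polynomial.X_pow_eq_sum_stirlingSecond_mul_descPochhammer R k)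

theorem Nat.choose_add_mul_descFactorial (n j m : ℕ) :
    n.choose (j + m) * (j + m).descFactorial j = n.descFactorial j * (n - j).choose m := by
  rw [Nat.descFactorial_eq_factorial_mul_choose, Nat.descFactorial_eq_factorial_mul_choose,
    Nat.mul_left_comm, Nat.choose_mul (Nat.le_add_right j m), Nat.add_sub_cancel_left,
    Nat.mul_assoc]

theorem sum_range_choose_mul_descFactorial_mul_pow {R : Type*} [CommRing R] (n j : ℕ) (z : R) :
    ∑ l ∈ range (n + 1), (n.choose l : R) * (l.descFactorial j : R) * z ^ l =
      (n.descFactorial j : R) * (1 + z) ^ (n - j) * z ^ j := by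
  rcases lt_or_ge n j with hnj | hjn
  · rw [Nat.descFactorial_eq_zero_iff_lt.2 hnj, Nat.cast_zero, zero_mul, zero_mul]
    refine sum_eq_zero fun l hl => ?_
    rw [Nat.descFactorial_eq_zero_iff_lt.2 ((mem_range_succ_iff.1 hl).trans_lt hnj)]
    simp
  · have hlow : ∑ l ∈ range j, (n.choose l : R) * (l.descFactorial j : R) * z ^ l = 0 :=
      sum_eq_zero fun l hl => by
        rw [Nat.descFactorial_eq_zero_iff_lt.2 (mem_range.1 hl)]; simp
    rw [show n + 1 = j + (n - j + 1) by omega, sum_range_add, hlow, zero_add, add_comm 1 z,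
      add_pow, mul_sum, sum_mul]
    refine sum_congr rfl fun m _ => ?_
    have h := congrArg (Nat.cast : ℕ → R) (Nat.choose_add_mul_descFactorial n j m)
    push_cast at h
    rw [pow_add, one_pow, mul_one]
    linear_combination (z ^ j * z ^ m) * h

theorem stmt_17 {R : Type*} [CommRing R] (N k : ℕ) (z : R) :
    ∑ l ∈ Finset.range (N + 1), (N.choose l : R) * (l : R) ^ k * z ^ l =
      ∑ j ∈ Finset.range (k + 1),
        (stirling2 k j : R) * (N.descFactorial j : R) * (1 + z) ^ (N - j) * z ^ j := by
  simp_rw [Nat.cast_pow_eq_sum_stirlingSecond_mul_descFactorial (R := R) _ k, mul_sum, sum_mul]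
  rw [sum_comm]
  refine sum_congr rfl fun j _ => ?_
  rw [stirling2_eq_stirlingSecond, mul_assoc _ _ ((1 + z) ^ _), mul_assoc,
    ← sum_range_choose_mul_descFactorial_mul_pow, mul_sum]
  refine sum_congr rfl fun l _ => by ring
end

section
/- The convolution of two log-concave sequences of positive real numbers is log-concave: if (a_k)_{k=0}^m and (b_k)_{k=0}^p are positive and satisfy a_k² ≥ a_{k-1}a_{k+1} and b_k² ≥ b_{k-1}b_{k+1} for all interior indices, then the sequence c_k = Σ_j a_j b_{k-j} satisfies c_k² ≥ c_{k-1} c_{k+1} for all 1 ≤ k ≤ m+p-1. -/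
/-!
Extend both sequences by zero to sequences `A`, `B` on `ℤ`. Positivity on an interval makes the
ratios `x k / x (k - 1)` decrease there, which upgrades log-concavity to
`x (i - 1) * x (j + 1) ≤ x i * x j` for all `i ≤ j + 1`. Expanding `c k ^ 2 - c (k - 1) * c (k + 1)`
as a double sum and pairing the term at `(i, j)` with the one at `(j + 1, i - 1)` gives
`2 (c k ^ 2 - c (k - 1) c (k + 1)) =`
`∑ (A i A j - A (i - 1) A (j + 1)) (B (k - i) B (k - j) - B (k - i + 1) B (k - j - 1))`,
where both factors have the sign of `j + 1 - i`.
-/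

open Finset Function

theorem Function.HasFiniteSupport.fst_mul_snd {α β R : Type*} [MulZeroClass R] {f : α → R}
    {g : β → R} (hf : f.HasFiniteSupport) (hg : g.HasFiniteSupport) :
    (fun p : α × β => f p.1 * g p.2).HasFiniteSupport :=
  (hf.prod hg).subset fun _ hp => ⟨left_ne_zero_of_mul hp, right_ne_zero_of_mul hp⟩

theorem finsum_mul_finsum {α β R : Type*} [NonUnitalNonAssocSemiring R] {f : α → R} {g : β → R}
    (hf : f.HasFiniteSupport) (hg : g.HasFiniteSupport) :
    (∑ᶠ i, f i) * (∑ᶠ j, g j) = ∑ᶠ p : α × β, f p.1 * g p.2 := by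
  rw [finsum_curry _ (hf.fst_mul_snd hg), finsum_mul' _ _ hf]
  exact finsum_congr fun i => mul_finsum' _ _ hg

def PairwiseLogConcave (x : ℤ → ℝ) : Prop :=
  ∀ i j, i ≤ j + 1 → x (i - 1) * x (j + 1) ≤ x i * x j

theorem pairwiseLogConcave_of_pos_on_Icc {x : ℤ → ℝ} {L R : ℤ}
    (hpos : ∀ i ∈ Set.Icc L R, 0 < x i) (hzero : ∀ i ∉ Set.Icc L R, x i = 0)
    (hlc : ∀ k, L < k → k < R → x (k - 1) * x (k + 1) ≤ x k ^ 2) : PairwiseLogConcave x := by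
  have hnonneg (i : ℤ) : 0 ≤ x i := by
    by_cases hi : i ∈ Set.Icc L R
    · exact (hpos i hi).le
    · exact (hzero i hi).ge
  intro i j hij
  by_cases hin : L ≤ i - 1 ∧ j + 1 ≤ R
  · have hratio : AntitoneOn (fun k => x k / x (k - 1)) (Set.Icc (L + 1) R) := by
      refine antitoneOn_of_add_one_le Set.ordConnected_Icc fun k _ hk hk1 => ?_
      simp only [Set.mem_Icc] at hk hk1
      rw [add_sub_cancel_right, div_le_div_iff₀ (hpos k (by constructor <;> omega))
        (hpos (k - 1) (by constructor <;> omega)), ← sq, mul_comm]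
      exact hlc k (by omega) (by omega)
    have h := hratio (a := i) (b := j + 1) (by constructor <;> omega) (by constructor <;> omega) hij
    simp only [add_sub_cancel_right] at h
    rwa [div_le_div_iff₀ (hpos j (by constructor <;> omega))
      (hpos (i - 1) (by constructor <;> omega)), mul_comm (x (j + 1))] at h
  · have hout : x (i - 1) * x (j + 1) = 0 := by
      rcases not_and_or.mp hin with h | h
      · rw [hzero (i - 1) (by simp only [Set.mem_Icc]; omega), zero_mul]
      · rw [hzero (j + 1) (by simp only [Set.mem_Icc]; omega), mul_zero]
    rw [hout]
    exact mul_nonneg (hnonneg i) (hnonneg j)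

theorem PairwiseLogConcave.mul_sub_mul_mul_sub_mul_nonneg {A B : ℤ → ℝ}
    (hA : PairwiseLogConcave A) (hB : PairwiseLogConcave B) (n i j : ℤ) :
    0 ≤ (A i * A j - A (i - 1) * A (j + 1)) *
      (B (n - i) * B (n - j) - B (n - i + 1) * B (n - j - 1)) := by
  rcases le_or_gt i (j + 1) with hij | hji
  · refine mul_nonneg (sub_nonneg.mpr (hA i j hij)) (sub_nonneg.mpr ?_)
    have h := hB (n - j) (n - i) (by omega)
    ring_nf at h ⊢
    linarith
  · refine mul_nonneg_of_nonpos_of_nonpos (sub_nonpos.mpr ?_) (sub_nonpos.mpr ?_)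
    · have h := hA (j + 1) (i - 1) (by omega)
      ring_nf at h ⊢
      linarith
    · have h := hB (n - i + 1) (n - j - 1) (by omega)
      ring_nf at h ⊢
      linarith

noncomputable def intConv (A B : ℤ → ℝ) (n : ℤ) : ℝ := ∑ᶠ i, A i * B (n - i)

theorem two_mul_intConv_sq_sub {A : ℤ → ℝ} (B : ℤ → ℝ) (hA : A.HasFiniteSupport) (n : ℤ) :
    2 * (intConv A B n ^ 2 - intConv A B (n - 1) * intConv A B (n + 1)) =
      ∑ᶠ p : ℤ × ℤ, (A p.1 * A p.2 - A (p.1 - 1) * A (p.2 + 1)) *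
        (B (n - p.1) * B (n - p.2) - B (n - p.1 + 1) * B (n - p.2 - 1)) := by
  have hprod (m m' : ℤ) : intConv A B m * intConv A B m' =
      ∑ᶠ p : ℤ × ℤ, A p.1 * B (m - p.1) * (A p.2 * B (m' - p.2)) :=
    finsum_mul_finsum (hA.mul_left _) (hA.mul_left _)
  set G : ℤ × ℤ → ℝ := fun p => A p.1 * B (n - p.1) * (A p.2 * B (n - p.2))
  set G' : ℤ × ℤ → ℝ := fun p => A (p.1 - 1) * B (n - p.1) * (A (p.2 + 1) * B (n - p.2))
  have hG : G.HasFiniteSupport :=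
    (hA.mul_left fun i => B (n - i)).fst_mul_snd (hA.mul_left fun i => B (n - i))
  have hG' : G'.HasFiniteSupport :=
    ((hA.comp_of_injective (sub_left_injective (b := (1 : ℤ)))).mul_left
      fun i => B (n - i)).fst_mul_snd
      ((hA.comp_of_injective (add_left_injective (1 : ℤ))).mul_left fun i => B (n - i))
  have hsq : intConv A B n ^ 2 = ∑ᶠ p, G p := by rw [sq, hprod]
  have hshift : intConv A B (n - 1) * intConv A B (n + 1) = ∑ᶠ p, G' p := by
    rw [hprod, ← finsum_comp_equiv ((Equiv.subRight 1).prodCongr (Equiv.addRight 1))]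
    refine finsum_congr fun p => ?_
    simp [G']
  set D : ℤ × ℤ → ℝ := fun p => G p - G' p
  have hD : D.HasFiniteSupport := hG.sub hG'
  let σ : ℤ × ℤ ≃ ℤ × ℤ :=
    ⟨fun p => (p.2 + 1, p.1 - 1), fun p => (p.2 + 1, p.1 - 1), fun p => by simp, fun p => by simp⟩
  rw [hsq, hshift, ← finsum_sub_distrib hG hG', two_mul]
  nth_rw 2 [← finsum_comp_equiv σ]
  refine (finsum_add_distrib hD (hD.comp_of_injective σ.injective)).symm.trans ?_
  refine finsum_congr fun p => ?_
  simp only [Equiv.coe_fn_mk, comp_apply, add_sub_cancel_right, sub_add_cancel, D, G, G', σ]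
  ring_nf

theorem intConv_sub_one_mul_intConv_add_one_le {A B : ℤ → ℝ} (hfin : A.HasFiniteSupport)
    (hA : PairwiseLogConcave A) (hB : PairwiseLogConcave B) (n : ℤ) :
    intConv A B (n - 1) * intConv A B (n + 1) ≤ intConv A B n ^ 2 := by
  have h := two_mul_intConv_sq_sub B hfin n
  have hsum := finsum_nonneg fun p : ℤ × ℤ => hA.mul_sub_mul_mul_sub_mul_nonneg hB n p.1 p.2
  linarith

def extendToInt (a : ℕ → ℝ) (i : ℤ) : ℝ := if 0 ≤ i then a i.toNat else 0

@[simp]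
theorem extendToInt_natCast (a : ℕ → ℝ) (n : ℕ) : extendToInt a n = a n := by
  simp [extendToInt]

theorem extendToInt_of_neg (a : ℕ → ℝ) {i : ℤ} (hi : i < 0) : extendToInt a i = 0 := by
  simp [extendToInt, not_le.mpr hi]

theorem support_extendToInt_subset {a : ℕ → ℝ} {m : ℕ} (hzero : ∀ k, m < k → a k = 0) :
    support (extendToInt a) ⊆ Set.Icc 0 (m : ℤ) := by
  intro i hi
  rw [mem_support] at hi
  have h0 : 0 ≤ i := not_lt.mp fun h => hi (extendToInt_of_neg a h)
  lift i to ℕ using h0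
  refine ⟨i.cast_nonneg, not_lt.mp fun hm => hi ?_⟩
  rw [extendToInt_natCast]
  exact hzero i (by omega)

theorem pairwiseLogConcave_extendToInt {a : ℕ → ℝ} {m : ℕ} (hpos : ∀ k ≤ m, 0 < a k)
    (hzero : ∀ k, m < k → a k = 0)
    (hlc : ∀ k, 1 ≤ k → k + 1 ≤ m → a (k - 1) * a (k + 1) ≤ a k ^ 2) :
    PairwiseLogConcave (extendToInt a) := by
  refine pairwiseLogConcave_of_pos_on_Icc (L := 0) (R := m) ?_
    (fun i hi => notMem_support.mp fun h => hi (support_extendToInt_subset hzero h)) ?_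
  · rintro i ⟨h0, hm⟩
    lift i to ℕ using h0
    rw [extendToInt_natCast]
    exact hpos i (by omega)
  · intro k hk0 hkm
    lift k to ℕ using hk0.le
    rw [show (k : ℤ) - 1 = ((k - 1 : ℕ) : ℤ) by omega, ← Nat.cast_add_one, extendToInt_natCast,
      extendToInt_natCast, extendToInt_natCast]
    exact hlc k (by omega) (by omega)

theorem sum_range_eq_intConv (a b : ℕ → ℝ) (k : ℕ) :
    ∑ j ∈ range (k + 1), a j * b (k - j) = intConv (extendToInt a) (extendToInt b) k := by
  rw [intConv, finsum_eq_sum_of_support_subset _ (s := (range (k + 1)).map Nat.castEmbedding),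
    sum_map]
  · refine sum_congr rfl fun j hj => ?_
    have hjk : j ≤ k := Nat.lt_succ_iff.mp (mem_range.mp hj)
    simp [← Nat.cast_sub hjk]
  · intro i hi
    have hA : extendToInt a i ≠ 0 := left_ne_zero_of_mul hi
    have hB : extendToInt b (k - i) ≠ 0 := right_ne_zero_of_mul hi
    have h0 : 0 ≤ i := not_lt.mp fun h => hA (extendToInt_of_neg a h)
    have hk : i ≤ k := not_lt.mp fun h => hB (extendToInt_of_neg b (by omega))
    simp only [coe_map, Nat.castEmbedding_apply, coe_range, Set.mem_image, Set.mem_Iio]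
    exact ⟨i.toNat, by omega, by omega⟩

theorem stmt_18 (m p : ℕ) (a b : ℕ → ℝ)
    (hapos : ∀ k ≤ m, 0 < a k) (hbpos : ∀ k ≤ p, 0 < b k)
    (ha0 : ∀ k, m < k → a k = 0) (hb0 : ∀ k, p < k → b k = 0)
    (halc : ∀ k, 1 ≤ k → k + 1 ≤ m → a (k - 1) * a (k + 1) ≤ a k ^ 2)
    (hblc : ∀ k, 1 ≤ k → k + 1 ≤ p → b (k - 1) * b (k + 1) ≤ b k ^ 2)
    (c : ℕ → ℝ) (hc : ∀ k, c k = ∑ j ∈ Finset.range (k + 1), a j * b (k - j)) :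
    ∀ k, 1 ≤ k → k + 1 ≤ m + p → c (k - 1) * c (k + 1) ≤ c k ^ 2 := by
  intro k hk _
  have hconv (n : ℕ) : c n = intConv (extendToInt a) (extendToInt b) n :=
    (hc n).trans (sum_range_eq_intConv a b n)
  rw [hconv, hconv, hconv]
  push_cast [Nat.cast_sub hk]
  exact intConv_sub_one_mul_intConv_add_one_le
    ((Set.finite_Icc 0 (m : ℤ)).subset (support_extendToInt_subset ha0))
    (pairwiseLogConcave_extendToInt hapos ha0 halc)
    (pairwiseLogConcave_extendToInt hbpos hb0 hblc) k
end
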